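/- arXiv:1707.05139 — 3 statements merged into one kernel-verified Lean document; each statement's English description precedes it below -/
import Mathlib

section
/- Let μ be a nontrivial nonnegative Borel measure on ℂ which is doubling with constant C > 0. Then for every z ∈ ℂ and every r > 0 one has μ(D(z, 2r)) ≥ (1 + C⁻³) · μ(D(z, r)). -/
open MeasureTheory Metric
open scoped ENNReal

/-!
Put a point `w` at distance `3r/2` from `z`. Then `D(w, r/2)` is disjoint from `D(z, r)` and
both lie in `D(z, 2r)`, while `D(z, r) ⊆ D(w, 4r)`, so three doublings give
`μ(D(z, r)) ≤ C³ μ(D(w, r/2))`. Adding up, `μ(D(z, 2r)) ≥ μ(D(z, r)) + C⁻³ μ(D(z, r))`.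
-/

section PseudoMetricSpace

variable {X : Type*} [PseudoMetricSpace X] [MeasurableSpace X] {μ : Measure X} {C : ℝ≥0∞}

theorem measure_ball_le_pow_mul_of_doubling
    (hμ : ∀ (z : X) (r : ℝ), 0 < r → μ (ball z r) ≤ C * μ (ball z (r / 2)))
    (z : X) {r : ℝ} (hr : 0 < r) (n : ℕ) :
    μ (ball z r) ≤ C ^ n * μ (ball z (r / 2 ^ n)) := by
  induction n with
  | zero => simp
  | succ n ih =>
    calc μ (ball z r) ≤ C ^ n * μ (ball z (r / 2 ^ n)) := ih
      _ ≤ C ^ n * (C * μ (ball z (r / 2 ^ n / 2))) := by gcongr; exact hμ z _ (by positivity)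
      _ = C ^ (n + 1) * μ (ball z (r / 2 ^ (n + 1))) := by rw [pow_succ, div_div, ← pow_succ, mul_assoc]

theorem measure_ball_le_pow_three_mul_of_doubling
    (hμ : ∀ (z : X) (r : ℝ), 0 < r → μ (ball z r) ≤ C * μ (ball z (r / 2)))
    {z w : X} {r : ℝ} (hr : 0 < r) (hw : dist z w ≤ 3 * r) :
    μ (ball z r) ≤ C ^ 3 * μ (ball w (r / 2)) :=
  calc μ (ball z r) ≤ μ (ball w (4 * r)) := measure_mono (ball_subset_ball' (by linarith))
    _ ≤ C ^ 3 * μ (ball w (4 * r / 2 ^ 3)) :=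
      measure_ball_le_pow_mul_of_doubling hμ w (by positivity) 3
    _ = C ^ 3 * μ (ball w (r / 2)) := by ring_nf

theorem measure_ball_add_measure_ball_le [OpensMeasurableSpace X]
    {z w : X} {r : ℝ} (hr : 0 ≤ r) (hw : dist w z = 3 * r / 2) :
    μ (ball z r) + μ (ball w (r / 2)) ≤ μ (ball z (2 * r)) := by
  have hdisj : Disjoint (ball z r) (ball w (r / 2)) := by
    refine Set.disjoint_left.mpr fun x hxz hxw => ?_
    have := dist_triangle w x z
    rw [mem_ball] at hxz hxw
    linarith [dist_comm w x]
  rw [← measure_union hdisj measurableSet_ball]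
  refine measure_mono (Set.union_subset (ball_subset_ball (by linarith)) ?_)
  exact ball_subset_ball' (by linarith)

theorem measure_ball_two_mul_ge_of_doubling [OpensMeasurableSpace X]
    (hμ : ∀ (z : X) (r : ℝ), 0 < r → μ (ball z r) ≤ C * μ (ball z (r / 2)))
    {z w : X} {r : ℝ} (hr : 0 < r) (hw : dist w z = 3 * r / 2) :
    (1 + C⁻¹ ^ 3) * μ (ball z r) ≤ μ (ball z (2 * r)) := by
  have hfar : C⁻¹ ^ 3 * μ (ball z r) ≤ μ (ball w (r / 2)) := by
    rw [← ENNReal.inv_pow, mul_comm, ← div_eq_mul_inv]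
    refine ENNReal.div_le_of_le_mul ?_
    rw [mul_comm]
    exact measure_ball_le_pow_three_mul_of_doubling hμ hr (by rw [dist_comm, hw]; linarith)
  calc (1 + C⁻¹ ^ 3) * μ (ball z r) = μ (ball z r) + C⁻¹ ^ 3 * μ (ball z r) := by
        rw [add_mul, one_mul]
    _ ≤ μ (ball z r) + μ (ball w (r / 2)) := by gcongr
    _ ≤ μ (ball z (2 * r)) := measure_ball_add_measure_ball_le hr.le hw

end PseudoMetricSpace

theorem doubling_lower_growth_general (μ : Measure ℂ) (C : ℝ) (hC : 0 < C)
    (hdoubling : ∀ (z : ℂ) (r : ℝ), 0 < r →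
      μ (Metric.ball z r) ≤ ENNReal.ofReal C * μ (Metric.ball z (r / 2))) :
    ∀ (z : ℂ) (r : ℝ), 0 < r →
      ENNReal.ofReal (1 + C⁻¹ ^ 3) * μ (Metric.ball z r) ≤ μ (Metric.ball z (2 * r)) := by
  intro z r hr
  obtain ⟨v, hv⟩ := exists_norm_eq ℂ (c := 3 * r / 2) (by positivity)
  rw [ENNReal.ofReal_add zero_le_one (by positivity), ENNReal.ofReal_one, ENNReal.ofReal_pow
    (by positivity), ENNReal.ofReal_inv_of_pos hC]
  exact measure_ball_two_mul_ge_of_doubling hdoubling hr (w := z + v) (by simpa using hv)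

/-- If `μ` is a nontrivial nonnegative Borel measure on `ℂ` which is
doubling with constant `C > 0` (i.e. `μ(D(z,r)) ≤ C·μ(D(z,r/2))` for all `z` and `r > 0`),
then `μ(D(z,2r)) ≥ (1 + C⁻³)·μ(D(z,r))` for every `z ∈ ℂ` and every `r > 0`. -/
theorem doubling_lower_growth (μ : Measure ℂ) (hμ : μ ≠ 0) (C : ℝ) (hC : 0 < C)
    (hdoubling : ∀ (z : ℂ) (r : ℝ), 0 < r →
      μ (Metric.ball z r) ≤ ENNReal.ofReal C * μ (Metric.ball z (r / 2))) :
    ∀ (z : ℂ) (r : ℝ), 0 < r →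
      ENNReal.ofReal (1 + C⁻¹ ^ 3) * μ (Metric.ball z r) ≤ μ (Metric.ball z (2 * r)) :=
  doubling_lower_growth_general μ C hC hdoubling
end

section
/- Let φ : ℂⁿ → ℝ be of class C² and let g : ℂⁿ → ℂ be of class C². Set h = e^{φ/2}·g. Then pointwise e^{−φ/2} · ( − Σ_{j=1}^n [ ∂/∂z_j (∂h/∂z̄_j) − (∂φ/∂z_j)(∂h/∂z̄_j) ] ) = ¼ ( −Δ_A g − V·g ), where Δ_A g = Σ_{j=1}^n [(−∂/∂x_j − (i/2) ∂φ/∂y_j)² + (−∂/∂y_j + (i/2) ∂φ/∂x_j)²] g and V = ½ Δφ. -/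
open MeasureTheory

/-- Partial derivative `∂f/∂x_j` of `f : ℂⁿ → ℂ`, identifying `ℂⁿ ≅ ℝ²ⁿ`, `z_j = x_j + i y_j`. -/
noncomputable def DXc (n : ℕ) (j : Fin n) (f : (Fin n → ℂ) → ℂ) (z : Fin n → ℂ) : ℂ :=
  fderiv ℝ f z (Pi.single j 1)

/-- Partial derivative `∂f/∂y_j` of `f : ℂⁿ → ℂ`. -/
noncomputable def DYc (n : ℕ) (j : Fin n) (f : (Fin n → ℂ) → ℂ) (z : Fin n → ℂ) : ℂ :=
  fderiv ℝ f z (Pi.single j Complex.I)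

/-- Partial derivative `∂φ/∂x_j` of `φ : ℂⁿ → ℝ`. -/
noncomputable def DXr (n : ℕ) (j : Fin n) (φ : (Fin n → ℂ) → ℝ) (z : Fin n → ℂ) : ℝ :=
  fderiv ℝ φ z (Pi.single j 1)

/-- Partial derivative `∂φ/∂y_j` of `φ : ℂⁿ → ℝ`. -/
noncomputable def DYr (n : ℕ) (j : Fin n) (φ : (Fin n → ℂ) → ℝ) (z : Fin n → ℂ) : ℝ :=
  fderiv ℝ φ z (Pi.single j Complex.I)

/-- Wirtinger derivative `∂f/∂z_j = ½(∂f/∂x_j - i ∂f/∂y_j)`. -/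
noncomputable def wdz (n : ℕ) (j : Fin n) (f : (Fin n → ℂ) → ℂ) (z : Fin n → ℂ) : ℂ :=
  (1 / 2) * (DXc n j f z - Complex.I * DYc n j f z)

/-- Wirtinger derivative `∂f/∂z̄_j = ½(∂f/∂x_j + i ∂f/∂y_j)`. -/
noncomputable def wdzb (n : ℕ) (j : Fin n) (f : (Fin n → ℂ) → ℂ) (z : Fin n → ℂ) : ℂ :=
  (1 / 2) * (DXc n j f z + Complex.I * DYc n j f z)

/-- The operator `(-∂/∂x_j - (i/2) ∂φ/∂y_j)` appearing in the magnetic Laplacian. -/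
noncomputable def opM1 (n : ℕ) (φ : (Fin n → ℂ) → ℝ) (j : Fin n)
    (v : (Fin n → ℂ) → ℂ) : (Fin n → ℂ) → ℂ :=
  fun z => -(DXc n j v z) - (Complex.I / 2) * (DYr n j φ z : ℂ) * v z

/-- The operator `(-∂/∂y_j + (i/2) ∂φ/∂x_j)` appearing in the magnetic Laplacian. -/
noncomputable def opM2 (n : ℕ) (φ : (Fin n → ℂ) → ℝ) (j : Fin n)
    (v : (Fin n → ℂ) → ℂ) : (Fin n → ℂ) → ℂ :=
  fun z => -(DYc n j v z) + (Complex.I / 2) * (DXr n j φ z : ℂ) * v z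

/-- The magnetic Laplacian
`Δ_A = Σ_j [(-∂/∂x_j - (i/2)∂φ/∂y_j)² + (-∂/∂y_j + (i/2)∂φ/∂x_j)²]`. -/
noncomputable def lapA (n : ℕ) (φ : (Fin n → ℂ) → ℝ) (g : (Fin n → ℂ) → ℂ)
    (z : Fin n → ℂ) : ℂ :=
  ∑ j, (opM1 n φ j (opM1 n φ j g) z + opM2 n φ j (opM2 n φ j g) z)

/-- The Laplacian `Δφ = Σ_j (∂²φ/∂x_j² + ∂²φ/∂y_j²)` of `φ : ℂⁿ → ℝ`. -/
noncomputable def lapR (n : ℕ) (φ : (Fin n → ℂ) → ℝ) (z : Fin n → ℂ) : ℝ :=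
  ∑ j, (DXr n j (fun w => DXr n j φ w) z + DYr n j (fun w => DYr n j φ w) z)

/-- The electric potential `V = ½ Δφ`. -/
noncomputable def potV (n : ℕ) (φ : (Fin n → ℂ) → ℝ) (z : Fin n → ℂ) : ℝ :=
  (1 / 2) * lapR n φ z

/-!
Write `P = ∂_x + (i/2) ∂_y φ` and `Q = ∂_y - (i/2) ∂_x φ`, so that `opM1 = -P` and `opM2 = -Q`.
Conjugation by `e^{φ/2}` turns `∂/∂z̄_j` into `½(P + iQ)` and `∂/∂z_j - ∂φ/∂z_j` into
`½(P - iQ)`, so the `j`-th summand on the left is `-¼(P - iQ)(P + iQ) g = -¼(P² + Q² + i[P, Q]) g`.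
Since the mixed second derivatives of `g` commute, `[P, Q] = -(i/2)(∂²φ/∂x_j² + ∂²φ/∂y_j²)`,
and this commutator is the potential term.
-/

open Complex

section Calculus

variable {E : Type*} [NormedAddCommGroup E] [NormedSpace ℝ E] {z : E}

theorem fderiv_ofReal_comp_apply {φ : E → ℝ} (hφ : DifferentiableAt ℝ φ z) (v : E) :
    fderiv ℝ (fun w => (φ w : ℂ)) z v = fderiv ℝ φ z v := by
  have h : HasFDerivAt (fun w => (φ w : ℂ)) (ofRealCLM.comp (fderiv ℝ φ z)) z :=
    ofRealCLM.hasFDerivAt.comp z hφ.hasFDerivAt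
  rw [h.fderiv]; rfl

theorem fderiv_fun_mul_apply {f g : E → ℂ} (hf : DifferentiableAt ℝ f z)
    (hg : DifferentiableAt ℝ g z) (v : E) :
    fderiv ℝ (fun w => f w * g w) z v = fderiv ℝ f z v * g z + f z * fderiv ℝ g z v := by
  rw [fderiv_fun_mul hf hg]; simp [mul_comm, add_comm]

theorem fderiv_linear_combination_apply {f g : E → ℂ} (hf : DifferentiableAt ℝ f z)
    (hg : DifferentiableAt ℝ g z) (a b : ℂ) (v : E) :
    fderiv ℝ (fun w => a * f w + b * g w) z v = a * fderiv ℝ f z v + b * fderiv ℝ g z v := by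
  rw [fderiv_fun_add (hf.const_mul a) (hg.const_mul b), fderiv_const_mul hf,
    fderiv_const_mul hg]; simp

theorem fderiv_cexp_mul_apply {ψ f : E → ℂ} (hψ : DifferentiableAt ℝ ψ z)
    (hf : DifferentiableAt ℝ f z) (v : E) :
    fderiv ℝ (fun w => exp (ψ w) * f w) z v
      = exp (ψ z) * (fderiv ℝ f z v + fderiv ℝ ψ z v * f z) := by
  rw [fderiv_fun_mul_apply hψ.cexp hf, hψ.hasFDerivAt.cexp.fderiv]
  simp only [smul_apply, smul_eq_mul]
  ring

theorem fderiv_cexp_ofReal_div_two_mul_apply {φ : E → ℝ} {f : E → ℂ}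
    (hφ : DifferentiableAt ℝ φ z) (hf : DifferentiableAt ℝ f z) (v : E) :
    fderiv ℝ (fun w => exp ((φ w : ℂ) / 2) * f w) z v
      = exp ((φ z : ℂ) / 2) * (fderiv ℝ f z v + (fderiv ℝ φ z v : ℂ) / 2 * f z) := by
  have hφC : DifferentiableAt ℝ (fun w => (φ w : ℂ)) z := ofRealCLM.differentiableAt.comp z hφ
  simp only [div_eq_mul_inv]
  rw [fderiv_cexp_mul_apply (hφC.mul_const _) hf, fderiv_mul_const hφC]
  simp only [smul_apply, fderiv_ofReal_comp_apply hφ, smul_eq_mul]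
  ring

theorem ContDiff.differentiable_fderiv_apply {F : Type*} [NormedAddCommGroup F]
    [NormedSpace ℝ F] {f : E → F} (hf : ContDiff ℝ 2 f) (v : E) :
    Differentiable ℝ (fun w => fderiv ℝ f w v) :=
  ((hf.fderiv_right (by norm_num)).clm_apply contDiff_const).differentiable one_ne_zero

theorem fderiv_fderiv_apply_comm {F : Type*} [NormedAddCommGroup F] [NormedSpace ℝ F]
    {f : E → F} (hf : ContDiff ℝ 2 f) (u v : E) :
    fderiv ℝ (fun w => fderiv ℝ f w v) z u = fderiv ℝ (fun w => fderiv ℝ f w u) z v := by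
  have hf' : DifferentiableAt ℝ (fderiv ℝ f) z :=
    ((hf.fderiv_right (by norm_num)).differentiable one_ne_zero) z
  rw [fderiv_clm_apply hf' (differentiableAt_const v),
    fderiv_clm_apply hf' (differentiableAt_const u)]
  simpa using hf.contDiffAt.isSymmSndFDerivAt (by simp) u v

end Calculus

section MagneticLaplacian

variable {n : ℕ} {φ : (Fin n → ℂ) → ℝ} {j : Fin n} {z : Fin n → ℂ}

theorem opM1_linear_combination {f₁ f₂ : (Fin n → ℂ) → ℂ} (hf₁ : DifferentiableAt ℝ f₁ z)
    (hf₂ : DifferentiableAt ℝ f₂ z) (a b : ℂ) :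
    opM1 n φ j (fun w => a * f₁ w + b * f₂ w) z = a * opM1 n φ j f₁ z + b * opM1 n φ j f₂ z := by
  simp only [opM1, DXc, fderiv_linear_combination_apply hf₁ hf₂]; ring

theorem opM2_linear_combination {f₁ f₂ : (Fin n → ℂ) → ℂ} (hf₁ : DifferentiableAt ℝ f₁ z)
    (hf₂ : DifferentiableAt ℝ f₂ z) (a b : ℂ) :
    opM2 n φ j (fun w => a * f₁ w + b * f₂ w) z = a * opM2 n φ j f₁ z + b * opM2 n φ j f₂ z := by
  simp only [opM2, DYc, fderiv_linear_combination_apply hf₁ hf₂]; ring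

theorem wdzb_cexp_mul {g : (Fin n → ℂ) → ℂ} (hφ : DifferentiableAt ℝ φ z)
    (hg : DifferentiableAt ℝ g z) :
    wdzb n j (fun w => exp ((φ w : ℂ) / 2) * g w) z
      = exp ((φ z : ℂ) / 2) * (-(1 / 2) * opM1 n φ j g z + -(I / 2) * opM2 n φ j g z) := by
  simp only [wdzb, opM1, opM2, DXc, DYc, DXr, DYr,
    fderiv_cexp_ofReal_div_two_mul_apply hφ hg]
  linear_combination (exp ((φ z : ℂ) / 2) * fderiv ℝ φ z (Pi.single j 1) * g z / 4) * I_sq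

theorem wdz_cexp_mul_sub {G : (Fin n → ℂ) → ℂ} (hφ : DifferentiableAt ℝ φ z)
    (hG : DifferentiableAt ℝ G z) :
    wdz n j (fun w => exp ((φ w : ℂ) / 2) * G w) z
        - wdz n j (fun w => (φ w : ℂ)) z * (exp ((φ z : ℂ) / 2) * G z)
      = exp ((φ z : ℂ) / 2) * (-(1 / 2) * opM1 n φ j G z + (I / 2) * opM2 n φ j G z) := by
  simp only [wdz, opM1, opM2, DXc, DYc, DXr, DYr,
    fderiv_cexp_ofReal_div_two_mul_apply hφ hG, fderiv_ofReal_comp_apply hφ]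
  linear_combination (-exp ((φ z : ℂ) / 2) * fderiv ℝ φ z (Pi.single j 1) * G z / 4) * I_sq

variable {g : (Fin n → ℂ) → ℂ}

theorem differentiable_opM1 (hφ : ContDiff ℝ 2 φ) (hg : ContDiff ℝ 2 g) :
    Differentiable ℝ (opM1 n φ j g) := by
  have := hg.differentiable_fderiv_apply (Pi.single j 1)
  have := hφ.differentiable_fderiv_apply (Pi.single j I)
  have := hg.differentiable two_ne_zero
  unfold opM1 DXc DYr; fun_prop

theorem differentiable_opM2 (hφ : ContDiff ℝ 2 φ) (hg : ContDiff ℝ 2 g) :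
    Differentiable ℝ (opM2 n φ j g) := by
  have := hg.differentiable_fderiv_apply (Pi.single j I)
  have := hφ.differentiable_fderiv_apply (Pi.single j 1)
  have := hg.differentiable two_ne_zero
  unfold opM2 DYc DXr; fun_prop

theorem fderiv_opM1_apply (hφ : ContDiff ℝ 2 φ) (hg : ContDiff ℝ 2 g) (v : Fin n → ℂ) :
    fderiv ℝ (opM1 n φ j g) z v = -fderiv ℝ (DXc n j g) z v
      - I / 2 * ((fderiv ℝ (DYr n j φ) z v : ℂ) * g z + DYr n j φ z * fderiv ℝ g z v) := by
  have hX : Differentiable ℝ (DXc n j g) := hg.differentiable_fderiv_apply _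
  have hY : Differentiable ℝ (DYr n j φ) := hφ.differentiable_fderiv_apply _
  have hg' := hg.differentiable two_ne_zero
  have hYC : DifferentiableAt ℝ (fun w => (DYr n j φ w : ℂ)) z :=
    (ofRealCLM.differentiable.comp hY) z
  unfold opM1
  rw [fderiv_fun_sub (hX z).fun_neg ((hYC.const_mul _).fun_mul (hg' z))]
  simp only [fderiv_fun_neg, sub_apply, neg_apply,
    fderiv_fun_mul_apply (hYC.const_mul _) (hg' z), fderiv_const_mul hYC,
    smul_apply, fderiv_ofReal_comp_apply (hY z), smul_eq_mul]
  ring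

theorem fderiv_opM2_apply (hφ : ContDiff ℝ 2 φ) (hg : ContDiff ℝ 2 g) (v : Fin n → ℂ) :
    fderiv ℝ (opM2 n φ j g) z v = -fderiv ℝ (DYc n j g) z v
      + I / 2 * ((fderiv ℝ (DXr n j φ) z v : ℂ) * g z + DXr n j φ z * fderiv ℝ g z v) := by
  have hY : Differentiable ℝ (DYc n j g) := hg.differentiable_fderiv_apply _
  have hX : Differentiable ℝ (DXr n j φ) := hφ.differentiable_fderiv_apply _
  have hg' := hg.differentiable two_ne_zero
  have hXC : DifferentiableAt ℝ (fun w => (DXr n j φ w : ℂ)) z :=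
    (ofRealCLM.differentiable.comp hX) z
  unfold opM2
  rw [fderiv_fun_add (hY z).fun_neg ((hXC.const_mul _).fun_mul (hg' z))]
  simp only [fderiv_fun_neg, add_apply, neg_apply,
    fderiv_fun_mul_apply (hXC.const_mul _) (hg' z), fderiv_const_mul hXC,
    smul_apply, fderiv_ofReal_comp_apply (hX z), smul_eq_mul]
  ring

theorem opM1_opM2_sub_opM2_opM1 (hφ : ContDiff ℝ 2 φ) (hg : ContDiff ℝ 2 g) :
    opM1 n φ j (opM2 n φ j g) z - opM2 n φ j (opM1 n φ j g) z
      = -(I / 2) * ((DXr n j (fun w => DXr n j φ w) z + DYr n j (fun w => DYr n j φ w) z : ℝ) : ℂ)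
          * g z := by
  have hXY : fderiv ℝ (DYc n j g) z (Pi.single j 1) = fderiv ℝ (DXc n j g) z (Pi.single j I) :=
    fderiv_fderiv_apply_comm hg _ _
  have h₁ : opM1 n φ j (opM2 n φ j g) z = -fderiv ℝ (opM2 n φ j g) z (Pi.single j 1)
      - I / 2 * DYr n j φ z * opM2 n φ j g z := rfl
  have h₂ : opM2 n φ j (opM1 n φ j g) z = -fderiv ℝ (opM1 n φ j g) z (Pi.single j I)
      + I / 2 * DXr n j φ z * opM1 n φ j g z := rfl
  have hXX : DXr n j (fun w => DXr n j φ w) z = fderiv ℝ (DXr n j φ) z (Pi.single j 1) := rfl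
  have hYY : DYr n j (fun w => DYr n j φ w) z = fderiv ℝ (DYr n j φ) z (Pi.single j I) := rfl
  rw [h₁, h₂, fderiv_opM1_apply hφ hg, fderiv_opM2_apply hφ hg, hXY, hXX, hYY]
  simp only [opM1, opM2, DXc, DYc]
  push_cast
  ring

end MagneticLaplacian

theorem conjugated_box00_summand_eq {n : ℕ} {φ : (Fin n → ℂ) → ℝ}
    {g : (Fin n → ℂ) → ℂ} (hφ : ContDiff ℝ 2 φ) (hg : ContDiff ℝ 2 g) (j : Fin n)
    (z : Fin n → ℂ) :
    exp (-(φ z : ℂ) / 2) *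
        (-(wdz n j (fun w => wdzb n j (fun w => exp ((φ w : ℂ) / 2) * g w) w) z
          - wdz n j (fun w => (φ w : ℂ)) z * wdzb n j (fun w => exp ((φ w : ℂ) / 2) * g w) z))
      = (1 / 4) * (-(opM1 n φ j (opM1 n φ j g) z + opM2 n φ j (opM2 n φ j g) z)
          - (1 / 2)
            * ((DXr n j (fun w => DXr n j φ w) z + DYr n j (fun w => DYr n j φ w) z : ℝ) : ℂ)
            * g z) := by
  have hφ' := hφ.differentiable two_ne_zero
  have hg' := hg.differentiable two_ne_zero
  have hM₁ := differentiable_opM1 (j := j) hφ hg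
  have hM₂ := differentiable_opM2 (j := j) hφ hg
  have hwdzb : (fun w => wdzb n j (fun w => exp ((φ w : ℂ) / 2) * g w) w)
      = fun w => exp ((φ w : ℂ) / 2) * (-(1 / 2) * opM1 n φ j g w + -(I / 2) * opM2 n φ j g w) :=
    funext fun w => wdzb_cexp_mul (hφ' w) (hg' w)
  have hexp : exp (-(φ z : ℂ) / 2) * exp ((φ z : ℂ) / 2) = 1 := by
    rw [← exp_add, neg_div, neg_add_cancel, exp_zero]
  have hcomm := opM1_opM2_sub_opM2_opM1 (z := z) (j := j) hφ hg
  rw [hwdzb, wdzb_cexp_mul (hφ' z) (hg' z),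
    wdz_cexp_mul_sub (hφ' z) (((hM₁ z).const_mul _).fun_add ((hM₂ z).const_mul _)),
    opM1_linear_combination (hM₁ z) (hM₂ z), opM2_linear_combination (hM₁ z) (hM₂ z),
    mul_neg, ← mul_assoc, hexp, one_mul]
  -- `-(i/4)[P, Q]` is the commutator part of `-¼(P - iQ)(P + iQ)`
  linear_combination (-(I / 4)) * hcomm + (opM2 n φ j (opM2 n φ j g) z / 4
    + ((DXr n j (fun w => DXr n j φ w) z + DYr n j (fun w => DYr n j φ w) z : ℝ) : ℂ)
      * g z / 8) * I_sq

/-- Let `φ : ℂⁿ → ℝ` and `g : ℂⁿ → ℂ` be of class `C²`, and set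
`h = e^{φ/2}·g`. Then pointwise
`e^{-φ/2}·(-Σ_j [∂/∂z_j(∂h/∂z̄_j) - (∂φ/∂z_j)(∂h/∂z̄_j)]) = ¼(-Δ_A g - V·g)`,
where `V = ½Δφ`. -/
theorem conjugated_box00_eq_pauli_minus
    (n : ℕ) (φ : (Fin n → ℂ) → ℝ) (hφ : ContDiff ℝ 2 φ)
    (g : (Fin n → ℂ) → ℂ) (hg : ContDiff ℝ 2 g)
    (h : (Fin n → ℂ) → ℂ) (hh : h = fun z => Complex.exp ((φ z : ℂ) / 2) * g z) :
    ∀ z, Complex.exp (-(φ z : ℂ) / 2) *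
        (-(∑ j, (wdz n j (fun w => wdzb n j h w) z
          - wdz n j (fun w => ((φ w : ℝ) : ℂ)) z * wdzb n j h z)))
      = (1 / 4) * (-(lapA n φ g z) - (potV n φ z : ℂ) * g z) := by
  intro z
  subst hh
  simp only [lapA, potV, lapR, ← Finset.sum_neg_distrib, Finset.mul_sum, ofReal_mul,
    ofReal_sum, Finset.sum_mul, ← Finset.sum_sub_distrib]
  exact Finset.sum_congr rfl fun j _ => by
    rw [conjugated_box00_summand_eq hφ hg j z]; push_cast; ring
end

section
/- Let φ : ℂⁿ → ℝ be of class C² and let g : ℂⁿ → ℂ be smooth with compact support. Then ∫_{ℂⁿ} ((−Δ_A − V) g)(z) · conj(g(z)) dλ(z) = 4 Σ_{j=1}^n ∫_{ℂⁿ} |∂(e^{φ/2} g)/∂z̄_j|² e^{−φ} dλ, where Δ_A g = Σ_{j=1}^n [(−∂/∂x_j − (i/2) ∂φ/∂y_j)² + (−∂/∂y_j + (i/2) ∂φ/∂x_j)²] g and V = ½Δφ. In particular ∫ ((−Δ_A − V) g) · conj(g) dλ is a nonnegative real number. -/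
open MeasureTheory

open Complex in
private lemma ibp_mul {n : ℕ} (v : Fin n → ℂ) {p q : (Fin n → ℂ) → ℂ}
    (hp : ContDiff ℝ 1 p) (hq : ContDiff ℝ 1 q) (hqs : HasCompactSupport q) :
    ∫ z, p z * fderiv ℝ q z v = -∫ z, fderiv ℝ p z v * q z := by
  have hq' : Continuous fun z => fderiv ℝ q z v :=
    (hq.continuous_fderiv one_ne_zero).clm_apply continuous_const
  have hp' : Continuous fun z => fderiv ℝ p z v :=
    (hp.continuous_fderiv one_ne_zero).clm_apply continuous_const
  have hqs' : HasCompactSupport fun z => fderiv ℝ q z v :=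
    (hqs.fderiv ℝ).comp_left (g := fun L : (Fin n → ℂ) →L[ℝ] ℂ => L v) rfl
  refine integral_mul_fderiv_eq_neg_fderiv_mul_of_integrable ?_ ?_ ?_
    (fun x _ => hp.differentiable one_ne_zero x) (fun x _ => hq.differentiable one_ne_zero x)
  · exact ((hp'.mul hq.continuous).integrable_of_hasCompactSupport hqs.mul_left)
  · exact ((hp.continuous.mul hq').integrable_of_hasCompactSupport hqs'.mul_left)
  · exact ((hp.continuous.mul hq.continuous).integrable_of_hasCompactSupport hqs.mul_left)

private lemma ibp_zero {n : ℕ} (v : Fin n → ℂ) {q : (Fin n → ℂ) → ℂ} (hq : ContDiff ℝ 1 q)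
    (hqs : HasCompactSupport q) : ∫ z, fderiv ℝ q z v = 0 := by
  have := ibp_mul v contDiff_const hq hqs (p := fun _ => (1:ℂ))
  simp [fderiv_const] at this
  simpa using this

private lemma fderiv_mul_apply {n : ℕ} {p q : (Fin n → ℂ) → ℂ} {z v : Fin n → ℂ}
    (hp : DifferentiableAt ℝ p z) (hq : DifferentiableAt ℝ q z) :
    fderiv ℝ (fun w => p w * q w) z v = fderiv ℝ p z v * q z + p z * fderiv ℝ q z v := by
  rw [fderiv_fun_mul hp hq]; simp; ring

private lemma fderiv_conj_apply {n : ℕ} {q : (Fin n → ℂ) → ℂ} {z v : Fin n → ℂ}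
    (hq : DifferentiableAt ℝ q z) :
    fderiv ℝ (fun w => (starRingEnd ℂ) (q w)) z v = (starRingEnd ℂ) (fderiv ℝ q z v) := by
  have h : fderiv ℝ (fun w => (Complex.conjCLE : ℂ →L[ℝ] ℂ) (q w)) z
      = (Complex.conjCLE : ℂ →L[ℝ] ℂ).comp (fderiv ℝ q z) :=
    ((Complex.conjCLE : ℂ →L[ℝ] ℂ).hasFDerivAt.comp z hq.hasFDerivAt).fderiv
  have h2 := congrArg (fun L : (Fin n → ℂ) →L[ℝ] ℂ => L v) h
  simpa using h2

private lemma fderiv_ofReal_apply {n : ℕ} {ψ : (Fin n → ℂ) → ℝ} {z v : Fin n → ℂ}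
    (hψ : DifferentiableAt ℝ ψ z) :
    fderiv ℝ (fun w => ((ψ w : ℝ) : ℂ)) z v = ((fderiv ℝ ψ z v : ℝ) : ℂ) := by
  have h : fderiv ℝ (fun w => Complex.ofRealCLM (ψ w)) z
      = Complex.ofRealCLM.comp (fderiv ℝ ψ z) :=
    (Complex.ofRealCLM.hasFDerivAt.comp z hψ.hasFDerivAt).fderiv
  have h2 := congrArg (fun L : (Fin n → ℂ) →L[ℝ] ℂ => L v) h
  simpa using h2

private lemma fderiv_half_ofReal {n : ℕ} {ψ : (Fin n → ℂ) → ℝ} {z v : Fin n → ℂ}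
    (hψ : DifferentiableAt ℝ ψ z) :
    fderiv ℝ (fun w => ((ψ w : ℂ))/2) z v = ((fderiv ℝ ψ z v : ℝ) : ℂ)/2 := by
  have hd0 : DifferentiableAt ℝ (fun w => ((ψ w : ℝ):ℂ)) z :=
    Complex.ofRealCLM.differentiableAt.comp z hψ
  have e : (fun w => ((ψ w : ℂ))/2) = fun w => ((ψ w : ℝ):ℂ) * (2⁻¹:ℂ) := by
    funext w; ring
  rw [e, fderiv_mul_const hd0, ContinuousLinearMap.smul_apply, fderiv_ofReal_apply hψ,
    smul_eq_mul]
  ring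

private lemma fderiv_cexp_real {n : ℕ} {ψ : (Fin n → ℂ) → ℝ} {z v : Fin n → ℂ}
    (hψ : DifferentiableAt ℝ ψ z) :
    fderiv ℝ (fun w => Complex.exp ((ψ w : ℂ)/2)) z v
      = Complex.exp ((ψ z : ℂ)/2) * (((fderiv ℝ ψ z v : ℝ) : ℂ)/2) := by
  have hd0 : DifferentiableAt ℝ (fun w => ((ψ w : ℝ):ℂ)) z :=
    Complex.ofRealCLM.differentiableAt.comp z hψ
  have hd : DifferentiableAt ℝ (fun w => ((ψ w : ℂ))/2) z := by
    have e : (fun w => ((ψ w : ℂ))/2) = fun w => ((ψ w : ℝ):ℂ) * (2⁻¹:ℂ) := by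
      funext w; ring
    rw [e]; exact hd0.mul_const _
  have h := (hd.hasFDerivAt.cexp).fderiv
  have h2 := congrArg (fun L : (Fin n → ℂ) →L[ℝ] ℂ => L v) h
  simp only [ContinuousLinearMap.smul_apply] at h2
  rw [h2, fderiv_half_ofReal hψ, smul_eq_mul]

private lemma contDiff_fderiv_apply {n : ℕ} {F : Type*} [NormedAddCommGroup F] [NormedSpace ℝ F]
    {m k : WithTop ℕ∞} {f : (Fin n → ℂ) → F} (hf : ContDiff ℝ k f) (h : m + 1 ≤ k)
    (v : Fin n → ℂ) : ContDiff ℝ m (fun z => fderiv ℝ f z v) :=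
  (hf.fderiv_right h).clm_apply contDiff_const

private lemma fderiv_fderiv_apply {n : ℕ} {F : Type*} [NormedAddCommGroup F] [NormedSpace ℝ F]
    {f : (Fin n → ℂ) → F} (hf : ContDiff ℝ 2 f) (z v w : Fin n → ℂ) :
    fderiv ℝ (fun u => fderiv ℝ f u w) z v = fderiv ℝ (fderiv ℝ f) z v w := by
  have hd : DifferentiableAt ℝ (fderiv ℝ f) z :=
    ((hf.fderiv_right (m := 1) (by norm_num)).differentiable one_ne_zero) z
  have h := ((ContinuousLinearMap.apply ℝ F w).hasFDerivAt.comp z hd.hasFDerivAt).fderiv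
  have h2 := congrArg (fun L : (Fin n → ℂ) →L[ℝ] F => L v) h
  simpa [Function.comp_def] using h2

private lemma clairaut {n : ℕ} {F : Type*} [NormedAddCommGroup F] [NormedSpace ℝ F]
    {f : (Fin n → ℂ) → F} (hf : ContDiff ℝ 2 f) (z v w : Fin n → ℂ) :
    fderiv ℝ (fun u => fderiv ℝ f u w) z v = fderiv ℝ (fun u => fderiv ℝ f u v) z w := by
  rw [fderiv_fderiv_apply hf, fderiv_fderiv_apply hf]
  exact (hf.contDiffAt.isSymmSndFDerivAt (by simp [minSmoothness_of_isRCLikeNormedField])) v w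

private lemma masterEq {n : ℕ} (φ : (Fin n → ℂ) → ℝ) (g : (Fin n → ℂ) → ℂ) (j : Fin n)
    (hφ : ContDiff ℝ 2 φ) (hg : ContDiff ℝ (⊤ : ℕ∞) g) (z : Fin n → ℂ) :
    (-(opM1 n φ j (opM1 n φ j g) z + opM2 n φ j (opM2 n φ j g) z)
      - (((1/2 : ℝ) * (DXr n j (fun w => DXr n j φ w) z + DYr n j (fun w => DYr n j φ w) z) : ℝ) : ℂ) * g z)
      * (starRingEnd ℂ) (g z)
    - (opM1 n φ j g z + Complex.I * opM2 n φ j g z)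
        * (starRingEnd ℂ) (opM1 n φ j g z + Complex.I * opM2 n φ j g z)
    = fderiv ℝ (fun w => opM1 n φ j g w * (starRingEnd ℂ) (g w)) z (Pi.single j 1)
      + fderiv ℝ (fun w => opM2 n φ j g w * (starRingEnd ℂ) (g w)) z (Pi.single j Complex.I)
      - (1/2 : ℂ) * fderiv ℝ (fun w => ((DXr n j φ w : ℝ) : ℂ) * (g w * (starRingEnd ℂ) (g w))) z (Pi.single j 1)
      - (1/2 : ℂ) * fderiv ℝ (fun w => ((DYr n j φ w : ℝ) : ℂ) * (g w * (starRingEnd ℂ) (g w))) z (Pi.single j Complex.I)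
      - Complex.I * fderiv ℝ (fun w => fderiv ℝ g w (Pi.single j Complex.I) * (starRingEnd ℂ) (g w)) z (Pi.single j 1)
      + Complex.I * fderiv ℝ (fun w => fderiv ℝ g w (Pi.single j 1) * (starRingEnd ℂ) (g w)) z (Pi.single j Complex.I) := by
  have hg1 : ContDiff ℝ 1 g := hg.of_le (by simp)
  have hg2 : ContDiff ℝ 2 g := hg.of_le (WithTop.coe_le_coe.mpr le_top)
  have hg3 : ContDiff ℝ 3 g := hg.of_le (WithTop.coe_le_coe.mpr le_top)
  have hgx : ContDiff ℝ 1 (fun w => fderiv ℝ g w (Pi.single j 1)) :=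
    contDiff_fderiv_apply hg2 (by norm_num) _
  have hgy : ContDiff ℝ 1 (fun w => fderiv ℝ g w (Pi.single j Complex.I)) :=
    contDiff_fderiv_apply hg2 (by norm_num) _
  have hpx : ContDiff ℝ 1 (fun w => fderiv ℝ φ w (Pi.single j 1)) :=
    contDiff_fderiv_apply hφ (by norm_num) _
  have hpy : ContDiff ℝ 1 (fun w => fderiv ℝ φ w (Pi.single j Complex.I)) :=
    contDiff_fderiv_apply hφ (by norm_num) _
  have hPx : ContDiff ℝ 1 (fun w => ((fderiv ℝ φ w (Pi.single j 1) : ℝ) : ℂ)) :=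
    Complex.ofRealCLM.contDiff.comp hpx
  have hPy : ContDiff ℝ 1 (fun w => ((fderiv ℝ φ w (Pi.single j Complex.I) : ℝ) : ℂ)) :=
    Complex.ofRealCLM.contDiff.comp hpy
  have ha : ContDiff ℝ 1 (opM1 n φ j g) :=
    (hgx.neg).sub ((contDiff_const.mul hPy).mul hg1)
  have hb : ContDiff ℝ 1 (opM2 n φ j g) :=
    (hgy.neg).add ((contDiff_const.mul hPx).mul hg1)
  have hcg : ContDiff ℝ 1 (fun w => (starRingEnd ℂ) (g w)) :=
    (Complex.conjCLE : ℂ →L[ℝ] ℂ).contDiff.comp hg1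
  have dg : DifferentiableAt ℝ g z := hg1.differentiable one_ne_zero z
  have dcg : DifferentiableAt ℝ (fun w => (starRingEnd ℂ) (g w)) z := hcg.differentiable one_ne_zero z
  have da : DifferentiableAt ℝ (opM1 n φ j g) z := ha.differentiable one_ne_zero z
  have db : DifferentiableAt ℝ (opM2 n φ j g) z := hb.differentiable one_ne_zero z
  have dgx : DifferentiableAt ℝ (fun w => fderiv ℝ g w (Pi.single j 1)) z := hgx.differentiable one_ne_zero z
  have dgy : DifferentiableAt ℝ (fun w => fderiv ℝ g w (Pi.single j Complex.I)) z := hgy.differentiable one_ne_zero z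
  have dpx : DifferentiableAt ℝ (fun w => fderiv ℝ φ w (Pi.single j 1)) z := hpx.differentiable one_ne_zero z
  have dpy : DifferentiableAt ℝ (fun w => fderiv ℝ φ w (Pi.single j Complex.I)) z := hpy.differentiable one_ne_zero z
  have dPx : DifferentiableAt ℝ (fun w => ((fderiv ℝ φ w (Pi.single j 1) : ℝ) : ℂ)) z := hPx.differentiable one_ne_zero z
  have dPy : DifferentiableAt ℝ (fun w => ((fderiv ℝ φ w (Pi.single j Complex.I) : ℝ) : ℂ)) z := hPy.differentiable one_ne_zero z
  have dgcg : DifferentiableAt ℝ (fun w => g w * (starRingEnd ℂ) (g w)) z := dg.mul dcg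
  rw [fderiv_mul_apply da dcg, fderiv_mul_apply db dcg,
    fderiv_mul_apply dgy dcg, fderiv_mul_apply dgx dcg]
  simp only [DXr, DYr]
  rw [fderiv_mul_apply dPx dgcg, fderiv_mul_apply dPy dgcg]
  rw [fderiv_mul_apply dg dcg, fderiv_mul_apply dg dcg]
  simp only [fderiv_conj_apply dg]
  rw [fderiv_ofReal_apply dpx, fderiv_ofReal_apply dpy]
  rw [clairaut hg2 z (Pi.single j 1) (Pi.single j Complex.I)]
  simp only [opM1, opM2, DXc, DYc, DXr, DYr]
  simp only [map_sub, map_add, map_neg, map_mul, map_div₀, Complex.conj_I, Complex.conj_ofReal,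
    map_ofNat]
  have h2 : Complex.I^2 = -1 := Complex.I_sq
  have h3 : Complex.I^3 = -Complex.I := by rw [pow_succ, h2]; ring
  have h4 : Complex.I^4 = 1 := by rw [pow_succ, h3]; simp [Complex.I_mul_I]
  push_cast
  ring_nf
  simp only [h2, h3, h4]
  ring


private lemma rhsEq {n : ℕ} (φ : (Fin n → ℂ) → ℝ) (g : (Fin n → ℂ) → ℂ) (j : Fin n)
    (hφ : ContDiff ℝ 2 φ) (hg : ContDiff ℝ (⊤ : ℕ∞) g) (z : Fin n → ℂ) :
    (opM1 n φ j g z + Complex.I * opM2 n φ j g z)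
      * (starRingEnd ℂ) (opM1 n φ j g z + Complex.I * opM2 n φ j g z)
    = ((4 * ‖wdzb n j (fun w => Complex.exp ((φ w : ℂ)/2) * g w) z‖ ^ 2
        * Real.exp (-(φ z)) : ℝ) : ℂ) := by
  have dg : DifferentiableAt ℝ g z := (hg.of_le (by simp) : ContDiff ℝ 1 g).differentiable one_ne_zero z
  have dφ : DifferentiableAt ℝ φ z := (hφ.of_le one_le_two).differentiable one_ne_zero z
  have dexp : DifferentiableAt ℝ (fun w => Complex.exp ((φ w : ℂ)/2)) z := by
    have hd0 : DifferentiableAt ℝ (fun w => ((φ w : ℝ):ℂ)) z :=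
      Complex.ofRealCLM.differentiableAt.comp z dφ
    have e : (fun w => ((φ w : ℂ))/2) = fun w => ((φ w : ℝ):ℂ) * (2⁻¹:ℂ) := by funext w; ring
    have : DifferentiableAt ℝ (fun w => ((φ w : ℂ))/2) z := by rw [e]; exact hd0.mul_const _
    exact this.hasFDerivAt.cexp.differentiableAt
  have hw : wdzb n j (fun w => Complex.exp ((φ w : ℂ)/2) * g w) z
      = Complex.exp ((φ z : ℂ)/2)
        * (-(1/2) * (opM1 n φ j g z + Complex.I * opM2 n φ j g z)) := by
    simp only [wdzb, DXc, DYc]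
    rw [fderiv_mul_apply dexp dg, fderiv_mul_apply dexp dg,
      fderiv_cexp_real dφ, fderiv_cexp_real dφ]
    simp only [opM1, opM2, DXc, DYc, DXr, DYr]
    have h2 : Complex.I^2 = -1 := Complex.I_sq
    ring_nf
    simp only [h2]
    ring
  rw [Complex.mul_conj, hw]
  rw [norm_mul, norm_mul]
  have e1 : ‖Complex.exp ((φ z : ℂ)/2)‖ = Real.exp (φ z / 2) := by
    rw [Complex.norm_exp]; norm_num
  have e2 : ‖(-(1/2 : ℂ))‖ = 1/2 := by norm_num
  rw [e1, e2]
  have e3 : ∀ w : ℂ, ‖w‖ ^ 2 = Complex.normSq w := Complex.sq_norm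
  have e4 : Real.exp (φ z / 2) ^ 2 = Real.exp (φ z) := by
    rw [← Real.exp_nat_mul]; norm_num; ring
  norm_cast
  rw [mul_pow, mul_pow, e3, e4]
  have e5 : Real.exp (φ z) * Real.exp (-(φ z)) = 1 := by
    rw [← Real.exp_add]; simp
  nlinarith [e5, Complex.normSq_nonneg (opM1 n φ j g z + Complex.I * opM2 n φ j g z),
    Real.exp_pos (φ z), Real.exp_pos (-(φ z))]

private noncomputable def lint (n : ℕ) (φ : (Fin n → ℂ) → ℝ) (g : (Fin n → ℂ) → ℂ)
    (j : Fin n) (z : Fin n → ℂ) : ℂ :=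
  (-(opM1 n φ j (opM1 n φ j g) z + opM2 n φ j (opM2 n φ j g) z)
    - (((1/2 : ℝ) * (DXr n j (fun w => DXr n j φ w) z + DYr n j (fun w => DYr n j φ w) z) : ℝ) : ℂ) * g z)
    * (starRingEnd ℂ) (g z)

private lemma lint_integrable {n : ℕ} (φ : (Fin n → ℂ) → ℝ) (g : (Fin n → ℂ) → ℂ) (j : Fin n)
    (hφ : ContDiff ℝ 2 φ) (hg : ContDiff ℝ (⊤ : ℕ∞) g) (hgs : HasCompactSupport g) :
    Integrable (lint n φ g j) := by
  have hg1 : ContDiff ℝ 1 g := hg.of_le (by simp)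
  have hg2 : ContDiff ℝ 2 g := hg.of_le (WithTop.coe_le_coe.mpr le_top)
  have hgx : ContDiff ℝ 1 (fun w => fderiv ℝ g w (Pi.single j 1)) :=
    contDiff_fderiv_apply hg2 (by norm_num) _
  have hgy : ContDiff ℝ 1 (fun w => fderiv ℝ g w (Pi.single j Complex.I)) :=
    contDiff_fderiv_apply hg2 (by norm_num) _
  have hpx : ContDiff ℝ 1 (fun w => fderiv ℝ φ w (Pi.single j 1)) :=
    contDiff_fderiv_apply hφ (by norm_num) _
  have hpy : ContDiff ℝ 1 (fun w => fderiv ℝ φ w (Pi.single j Complex.I)) :=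
    contDiff_fderiv_apply hφ (by norm_num) _
  have hPx : ContDiff ℝ 1 (fun w => ((fderiv ℝ φ w (Pi.single j 1) : ℝ) : ℂ)) :=
    Complex.ofRealCLM.contDiff.comp hpx
  have hPy : ContDiff ℝ 1 (fun w => ((fderiv ℝ φ w (Pi.single j Complex.I) : ℝ) : ℂ)) :=
    Complex.ofRealCLM.contDiff.comp hpy
  have ha : ContDiff ℝ 1 (opM1 n φ j g) :=
    (hgx.neg).sub ((contDiff_const.mul hPy).mul hg1)
  have hb : ContDiff ℝ 1 (opM2 n φ j g) :=
    (hgy.neg).add ((contDiff_const.mul hPx).mul hg1)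
  have hcg : Continuous (fun w => (starRingEnd ℂ) (g w)) :=
    Complex.continuous_conj.comp hg1.continuous
  have copM11 : Continuous (fun z => opM1 n φ j (opM1 n φ j g) z) := by
    have e : (fun z => opM1 n φ j (opM1 n φ j g) z)
        = fun z => -(fderiv ℝ (opM1 n φ j g) z (Pi.single j 1))
          - (Complex.I/2) * ((fderiv ℝ φ z (Pi.single j Complex.I) : ℝ) : ℂ)
            * (opM1 n φ j g z) := rfl
    rw [e]
    exact (((ha.continuous_fderiv one_ne_zero).clm_apply continuous_const).neg).sub
      ((continuous_const.mul (Complex.continuous_ofReal.comp hpy.continuous)).mul ha.continuous)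
  have copM22 : Continuous (fun z => opM2 n φ j (opM2 n φ j g) z) := by
    have e : (fun z => opM2 n φ j (opM2 n φ j g) z)
        = fun z => -(fderiv ℝ (opM2 n φ j g) z (Pi.single j Complex.I))
          + (Complex.I/2) * ((fderiv ℝ φ z (Pi.single j 1) : ℝ) : ℂ)
            * (opM2 n φ j g z) := rfl
    rw [e]
    exact (((hb.continuous_fderiv one_ne_zero).clm_apply continuous_const).neg).add
      ((continuous_const.mul (Complex.continuous_ofReal.comp hpx.continuous)).mul hb.continuous)
  have cpxx : Continuous (fun z => fderiv ℝ (fun w => fderiv ℝ φ w (Pi.single j 1)) z (Pi.single j 1)) :=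
    (hpx.continuous_fderiv one_ne_zero).clm_apply continuous_const
  have cpyy : Continuous (fun z => fderiv ℝ (fun w => fderiv ℝ φ w (Pi.single j Complex.I)) z (Pi.single j Complex.I)) :=
    (hpy.continuous_fderiv one_ne_zero).clm_apply continuous_const
  have cLint : Continuous (lint n φ g j) := by
    have e : lint n φ g j = fun z =>
      (-(opM1 n φ j (opM1 n φ j g) z + opM2 n φ j (opM2 n φ j g) z)
        - ((((1/2 : ℝ) * (fderiv ℝ (fun w => fderiv ℝ φ w (Pi.single j 1)) z (Pi.single j 1)
            + fderiv ℝ (fun w => fderiv ℝ φ w (Pi.single j Complex.I)) z (Pi.single j Complex.I)) : ℝ)) : ℂ) * g z)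
        * (starRingEnd ℂ) (g z) := rfl
    rw [e]
    exact ((((copM11.add copM22).neg).sub
      ((Complex.continuous_ofReal.comp (continuous_const.mul (cpxx.add cpyy))).mul
        hg1.continuous)).mul hcg)
  have hscg : HasCompactSupport (fun w => (starRingEnd ℂ) (g w)) :=
    hgs.comp_left (map_zero _)
  exact cLint.integrable_of_hasCompactSupport hscg.mul_left

set_option maxHeartbeats 2000000 in
private lemma perj {n : ℕ} (φ : (Fin n → ℂ) → ℝ) (g : (Fin n → ℂ) → ℂ) (j : Fin n)
    (hφ : ContDiff ℝ 2 φ) (hg : ContDiff ℝ (⊤ : ℕ∞) g) (hgs : HasCompactSupport g) :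
    ∫ z, lint n φ g j z
      = ((4 * ∫ z, ‖wdzb n j (fun w => Complex.exp ((φ w : ℂ)/2) * g w) z‖ ^ 2
          * Real.exp (-(φ z)) : ℝ) : ℂ) := by
  have hg1 : ContDiff ℝ 1 g := hg.of_le (by simp)
  have hg2 : ContDiff ℝ 2 g := hg.of_le (WithTop.coe_le_coe.mpr le_top)
  have hgx : ContDiff ℝ 1 (fun w => fderiv ℝ g w (Pi.single j 1)) :=
    contDiff_fderiv_apply hg2 (by norm_num) _
  have hgy : ContDiff ℝ 1 (fun w => fderiv ℝ g w (Pi.single j Complex.I)) :=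
    contDiff_fderiv_apply hg2 (by norm_num) _
  have hpx : ContDiff ℝ 1 (fun w => fderiv ℝ φ w (Pi.single j 1)) :=
    contDiff_fderiv_apply hφ (by norm_num) _
  have hpy : ContDiff ℝ 1 (fun w => fderiv ℝ φ w (Pi.single j Complex.I)) :=
    contDiff_fderiv_apply hφ (by norm_num) _
  have hPx : ContDiff ℝ 1 (fun w => ((fderiv ℝ φ w (Pi.single j 1) : ℝ) : ℂ)) :=
    Complex.ofRealCLM.contDiff.comp hpx
  have hPy : ContDiff ℝ 1 (fun w => ((fderiv ℝ φ w (Pi.single j Complex.I) : ℝ) : ℂ)) :=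
    Complex.ofRealCLM.contDiff.comp hpy
  have ha : ContDiff ℝ 1 (opM1 n φ j g) :=
    (hgx.neg).sub ((contDiff_const.mul hPy).mul hg1)
  have hb : ContDiff ℝ 1 (opM2 n φ j g) :=
    (hgy.neg).add ((contDiff_const.mul hPx).mul hg1)
  have hcg : ContDiff ℝ 1 (fun w => (starRingEnd ℂ) (g w)) :=
    (Complex.conjCLE : ℂ →L[ℝ] ℂ).contDiff.comp hg1
  have hscg : HasCompactSupport (fun w => (starRingEnd ℂ) (g w)) :=
    hgs.comp_left (map_zero _)
  have hsgx : HasCompactSupport (fun w => fderiv ℝ g w (Pi.single j 1)) :=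
    (hgs.fderiv ℝ).comp_left (g := fun L : (Fin n → ℂ) →L[ℝ] ℂ => L (Pi.single j 1)) rfl
  have hsgy : HasCompactSupport (fun w => fderiv ℝ g w (Pi.single j Complex.I)) :=
    (hgs.fderiv ℝ).comp_left (g := fun L : (Fin n → ℂ) →L[ℝ] ℂ => L (Pi.single j Complex.I)) rfl
  have hsa : HasCompactSupport (opM1 n φ j g) := by
    have e : opM1 n φ j g = fun w => -(fderiv ℝ g w (Pi.single j 1))
        - ((Complex.I/2) * ((fderiv ℝ φ w (Pi.single j Complex.I) : ℝ) : ℂ)) * g w := rfl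
    rw [e]
    exact HasCompactSupport.comp₂_left (hsgx.comp_left neg_zero)
      (HasCompactSupport.mul_left hgs) (sub_zero 0)
  have hsb : HasCompactSupport (opM2 n φ j g) := by
    have e : opM2 n φ j g = fun w => -(fderiv ℝ g w (Pi.single j Complex.I))
        + ((Complex.I/2) * ((fderiv ℝ φ w (Pi.single j 1) : ℝ) : ℂ)) * g w := rfl
    rw [e]
    exact HasCompactSupport.comp₂_left (hsgy.comp_left neg_zero)
      (HasCompactSupport.mul_left hgs) (add_zero 0)
  have hsab : HasCompactSupport (fun z => opM1 n φ j g z + Complex.I * opM2 n φ j g z) :=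
    HasCompactSupport.comp₂_left hsa (HasCompactSupport.mul_left hsb) (add_zero 0)
  have hscab : HasCompactSupport (fun z =>
      (starRingEnd ℂ) (opM1 n φ j g z + Complex.I * opM2 n φ j g z)) :=
    hsab.comp_left (map_zero _)
  have hIL : Integrable (lint n φ g j) := lint_integrable φ g j hφ hg hgs
  have hIR : Integrable (fun z => (opM1 n φ j g z + Complex.I * opM2 n φ j g z)
      * (starRingEnd ℂ) (opM1 n φ j g z + Complex.I * opM2 n φ j g z)) := by
    have c1 : Continuous (fun z => opM1 n φ j g z + Complex.I * opM2 n φ j g z) :=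
      ha.continuous.add (continuous_const.mul hb.continuous)
    exact ((c1.mul (Complex.continuous_conj.comp c1)).integrable_of_hasCompactSupport
      hscab.mul_left)
  -- the six divergence terms
  have hF1 : ContDiff ℝ 1 (fun w => opM1 n φ j g w * (starRingEnd ℂ) (g w)) := ha.mul hcg
  have hF2 : ContDiff ℝ 1 (fun w => opM2 n φ j g w * (starRingEnd ℂ) (g w)) := hb.mul hcg
  have hF3 : ContDiff ℝ 1 (fun w => ((DXr n j φ w : ℝ) : ℂ) * (g w * (starRingEnd ℂ) (g w))) :=
    hPx.mul (hg1.mul hcg)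
  have hF4 : ContDiff ℝ 1 (fun w => ((DYr n j φ w : ℝ) : ℂ) * (g w * (starRingEnd ℂ) (g w))) :=
    hPy.mul (hg1.mul hcg)
  have hF5 : ContDiff ℝ 1 (fun w => fderiv ℝ g w (Pi.single j Complex.I) * (starRingEnd ℂ) (g w)) :=
    hgy.mul hcg
  have hF6 : ContDiff ℝ 1 (fun w => fderiv ℝ g w (Pi.single j 1) * (starRingEnd ℂ) (g w)) :=
    hgx.mul hcg
  have hsF1 : HasCompactSupport (fun w => opM1 n φ j g w * (starRingEnd ℂ) (g w)) := hscg.mul_left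
  have hsF2 : HasCompactSupport (fun w => opM2 n φ j g w * (starRingEnd ℂ) (g w)) := hscg.mul_left
  have hsF3 : HasCompactSupport (fun w => ((DXr n j φ w : ℝ) : ℂ) * (g w * (starRingEnd ℂ) (g w))) :=
    HasCompactSupport.mul_left hscg.mul_left
  have hsF4 : HasCompactSupport (fun w => ((DYr n j φ w : ℝ) : ℂ) * (g w * (starRingEnd ℂ) (g w))) :=
    HasCompactSupport.mul_left hscg.mul_left
  have hsF5 : HasCompactSupport (fun w => fderiv ℝ g w (Pi.single j Complex.I) * (starRingEnd ℂ) (g w)) :=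
    hscg.mul_left
  have hsF6 : HasCompactSupport (fun w => fderiv ℝ g w (Pi.single j 1) * (starRingEnd ℂ) (g w)) :=
    hscg.mul_left
  have hz1 := ibp_zero (Pi.single j 1) hF1 hsF1
  have hz2 := ibp_zero (Pi.single j Complex.I) hF2 hsF2
  have hz3 := ibp_zero (Pi.single j 1) hF3 hsF3
  have hz4 := ibp_zero (Pi.single j Complex.I) hF4 hsF4
  have hz5 := ibp_zero (Pi.single j 1) hF5 hsF5
  have hz6 := ibp_zero (Pi.single j Complex.I) hF6 hsF6
  have mkInt : ∀ (v : Fin n → ℂ) (F : (Fin n → ℂ) → ℂ), ContDiff ℝ 1 F → HasCompactSupport F →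
      Integrable (fun z => fderiv ℝ F z v) := by
    intro v F hF hsF
    exact (((hF.continuous_fderiv one_ne_zero).clm_apply continuous_const).integrable_of_hasCompactSupport
      ((hsF.fderiv ℝ).comp_left (g := fun L : (Fin n → ℂ) →L[ℝ] ℂ => L v) rfl))
  have ii1 := mkInt (Pi.single j 1) _ hF1 hsF1
  have ii2 := mkInt (Pi.single j Complex.I) _ hF2 hsF2
  have ii3 := (mkInt (Pi.single j 1) _ hF3 hsF3).const_mul (1/2 : ℂ)
  have ii4 := (mkInt (Pi.single j Complex.I) _ hF4 hsF4).const_mul (1/2 : ℂ)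
  have ii5 := (mkInt (Pi.single j 1) _ hF5 hsF5).const_mul (Complex.I)
  have ii6 := (mkInt (Pi.single j Complex.I) _ hF6 hsF6).const_mul (Complex.I)
  have master := masterEq φ g j hφ hg
  have hzero : (∫ z, (lint n φ g j z
      - (opM1 n φ j g z + Complex.I * opM2 n φ j g z)
        * (starRingEnd ℂ) (opM1 n φ j g z + Complex.I * opM2 n φ j g z))) = 0 := by
    have e : (fun z => lint n φ g j z
        - (opM1 n φ j g z + Complex.I * opM2 n φ j g z)
          * (starRingEnd ℂ) (opM1 n φ j g z + Complex.I * opM2 n φ j g z))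
      = fun z =>
        fderiv ℝ (fun w => opM1 n φ j g w * (starRingEnd ℂ) (g w)) z (Pi.single j 1)
        + fderiv ℝ (fun w => opM2 n φ j g w * (starRingEnd ℂ) (g w)) z (Pi.single j Complex.I)
        - (1/2 : ℂ) * fderiv ℝ (fun w => ((DXr n j φ w : ℝ) : ℂ) * (g w * (starRingEnd ℂ) (g w))) z (Pi.single j 1)
        - (1/2 : ℂ) * fderiv ℝ (fun w => ((DYr n j φ w : ℝ) : ℂ) * (g w * (starRingEnd ℂ) (g w))) z (Pi.single j Complex.I)
        - Complex.I * fderiv ℝ (fun w => fderiv ℝ g w (Pi.single j Complex.I) * (starRingEnd ℂ) (g w)) z (Pi.single j 1)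
        + Complex.I * fderiv ℝ (fun w => fderiv ℝ g w (Pi.single j 1) * (starRingEnd ℂ) (g w)) z (Pi.single j Complex.I) := by
      funext z; exact master z
    rw [e]
    have j1 : Integrable (fun z =>
        fderiv ℝ (fun w => opM1 n φ j g w * (starRingEnd ℂ) (g w)) z (Pi.single j 1)
        + fderiv ℝ (fun w => opM2 n φ j g w * (starRingEnd ℂ) (g w)) z (Pi.single j Complex.I)) := ii1.add ii2
    have j2 : Integrable (fun z =>
        fderiv ℝ (fun w => opM1 n φ j g w * (starRingEnd ℂ) (g w)) z (Pi.single j 1)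
        + fderiv ℝ (fun w => opM2 n φ j g w * (starRingEnd ℂ) (g w)) z (Pi.single j Complex.I)
        - (1/2 : ℂ) * fderiv ℝ (fun w => ((DXr n j φ w : ℝ) : ℂ) * (g w * (starRingEnd ℂ) (g w))) z (Pi.single j 1)) := j1.sub ii3
    have j3 : Integrable (fun z =>
        fderiv ℝ (fun w => opM1 n φ j g w * (starRingEnd ℂ) (g w)) z (Pi.single j 1)
        + fderiv ℝ (fun w => opM2 n φ j g w * (starRingEnd ℂ) (g w)) z (Pi.single j Complex.I)
        - (1/2 : ℂ) * fderiv ℝ (fun w => ((DXr n j φ w : ℝ) : ℂ) * (g w * (starRingEnd ℂ) (g w))) z (Pi.single j 1)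
        - (1/2 : ℂ) * fderiv ℝ (fun w => ((DYr n j φ w : ℝ) : ℂ) * (g w * (starRingEnd ℂ) (g w))) z (Pi.single j Complex.I)) := j2.sub ii4
    have j4 : Integrable (fun z =>
        fderiv ℝ (fun w => opM1 n φ j g w * (starRingEnd ℂ) (g w)) z (Pi.single j 1)
        + fderiv ℝ (fun w => opM2 n φ j g w * (starRingEnd ℂ) (g w)) z (Pi.single j Complex.I)
        - (1/2 : ℂ) * fderiv ℝ (fun w => ((DXr n j φ w : ℝ) : ℂ) * (g w * (starRingEnd ℂ) (g w))) z (Pi.single j 1)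
        - (1/2 : ℂ) * fderiv ℝ (fun w => ((DYr n j φ w : ℝ) : ℂ) * (g w * (starRingEnd ℂ) (g w))) z (Pi.single j Complex.I)
        - Complex.I * fderiv ℝ (fun w => fderiv ℝ g w (Pi.single j Complex.I) * (starRingEnd ℂ) (g w)) z (Pi.single j 1)) := j3.sub ii5
    rw [integral_add j4 ii6, integral_sub j3 ii5, integral_sub j2 ii4, integral_sub j1 ii3,
      integral_add ii1 ii2,
      integral_const_mul, integral_const_mul, integral_const_mul, integral_const_mul,
      hz1, hz2, hz3, hz4, hz5, hz6]
    simp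
  have hLR : (∫ z, lint n φ g j z) = ∫ z, (opM1 n φ j g z + Complex.I * opM2 n φ j g z)
      * (starRingEnd ℂ) (opM1 n φ j g z + Complex.I * opM2 n φ j g z) := by
    have := integral_sub hIL hIR
    rw [this] at hzero
    exact sub_eq_zero.mp hzero
  rw [hLR]
  have hpt := rhsEq φ g j hφ hg
  calc ∫ z, (opM1 n φ j g z + Complex.I * opM2 n φ j g z)
      * (starRingEnd ℂ) (opM1 n φ j g z + Complex.I * opM2 n φ j g z)
      = ∫ z, ((4 * ‖wdzb n j (fun w => Complex.exp ((φ w : ℂ)/2) * g w) z‖ ^ 2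
          * Real.exp (-(φ z)) : ℝ) : ℂ) := by simp only [hpt]
    _ = ((∫ z, 4 * ‖wdzb n j (fun w => Complex.exp ((φ w : ℂ)/2) * g w) z‖ ^ 2
          * Real.exp (-(φ z)) : ℝ) : ℂ) := integral_ofReal
    _ = ((4 * ∫ z, ‖wdzb n j (fun w => Complex.exp ((φ w : ℂ)/2) * g w) z‖ ^ 2
          * Real.exp (-(φ z)) : ℝ) : ℂ) := by
        have e : (∫ z, 4 * ‖wdzb n j (fun w => Complex.exp ((φ w : ℂ)/2) * g w) z‖ ^ 2
            * Real.exp (-(φ z)))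
            = 4 * ∫ z, ‖wdzb n j (fun w => Complex.exp ((φ w : ℂ)/2) * g w) z‖ ^ 2
            * Real.exp (-(φ z)) := by
          rw [← integral_const_mul]
          congr 1; funext z; ring
        exact congrArg _ e

set_option maxHeartbeats 1000000 in
/-- Let `φ : ℂⁿ → ℝ` be of class `C²` and let `g : ℂⁿ → ℂ` be smooth
with compact support. Then
`∫ ((-Δ_A - V)g)·conj(g) dλ = 4 Σ_j ∫ |∂(e^{φ/2}g)/∂z̄_j|² e^{-φ} dλ` (`V = ½Δφ`);
in particular the left-hand side is a nonnegative real number. -/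
theorem pauli_minus_quadratic_form
    (n : ℕ) (φ : (Fin n → ℂ) → ℝ) (hφ : ContDiff ℝ 2 φ)
    (g : (Fin n → ℂ) → ℂ) (hg : ContDiff ℝ (⊤ : ℕ∞) g) (hgs : HasCompactSupport g)
    (h : (Fin n → ℂ) → ℂ) (hh : h = fun z => Complex.exp ((φ z : ℂ) / 2) * g z) :
    ∫ z, (-(lapA n φ g z) - (potV n φ z : ℂ) * g z) * (starRingEnd ℂ) (g z)
      = ((4 * ∑ j, ∫ z, ‖wdzb n j h z‖ ^ 2 * Real.exp (-(φ z)) : ℝ) : ℂ) ∧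
    0 ≤ (4 * ∑ j, ∫ z, ‖wdzb n j h z‖ ^ 2 * Real.exp (-(φ z)) : ℝ) := by
  subst hh
  have key : ∀ j : Fin n, ∫ z, lint n φ g j z
      = ((4 * ∫ z, ‖wdzb n j (fun w => Complex.exp ((φ w : ℂ)/2) * g w) z‖ ^ 2
          * Real.exp (-(φ z)) : ℝ) : ℂ) := fun j => perj φ g j hφ hg hgs
  constructor
  · have hdecomp : ∀ z, (-(lapA n φ g z) - ((potV n φ z : ℝ) : ℂ) * g z) * (starRingEnd ℂ) (g z)
        = ∑ j, lint n φ g j z := by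
      intro z
      have e : ∀ j : Fin n,
          lint n φ g j z
          = -((opM1 n φ j (opM1 n φ j g) z + opM2 n φ j (opM2 n φ j g) z) * (starRingEnd ℂ) (g z))
            - (1/2 : ℂ) * (((DXr n j (fun w => DXr n j φ w) z + DYr n j (fun w => DYr n j φ w) z : ℝ) : ℂ)
              * (g z * (starRingEnd ℂ) (g z))) := by
        intro j; simp only [lint]; push_cast; ring
      rw [Finset.sum_congr rfl (fun j _ => e j), Finset.sum_sub_distrib]
      rw [Finset.sum_neg_distrib, ← Finset.sum_mul, ← Finset.mul_sum, ← Finset.sum_mul]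
      simp only [lapA, potV, lapR]
      push_cast
      ring
    calc ∫ z, (-(lapA n φ g z) - ((potV n φ z : ℝ) : ℂ) * g z) * (starRingEnd ℂ) (g z)
        = ∫ z, ∑ j, lint n φ g j z := by simp only [hdecomp]
      _ = ∑ j, ∫ z, lint n φ g j z :=
          integral_finset_sum Finset.univ (fun j _ => lint_integrable φ g j hφ hg hgs)
      _ = ∑ j, ((4 * ∫ z, ‖wdzb n j (fun w => Complex.exp ((φ w : ℂ)/2) * g w) z‖ ^ 2
          * Real.exp (-(φ z)) : ℝ) : ℂ) := Finset.sum_congr rfl (fun j _ => key j)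
      _ = ((4 * ∑ j, ∫ z, ‖wdzb n j (fun w => Complex.exp ((φ w : ℂ)/2) * g w) z‖ ^ 2
          * Real.exp (-(φ z)) : ℝ) : ℂ) := by
          push_cast
          rw [Finset.mul_sum]
  · refine mul_nonneg (by norm_num) (Finset.sum_nonneg fun j _ => integral_nonneg fun z => ?_)
    positivity
end
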